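/- Let f_1 : ℝ → [0,+∞] be proper convex lsc with f_1(0)=0, and suppose m_0 lies in the interior of the domain D(∂f_1), with 0 in the interior of D(∂f_1) as well. Then there exist constants δ_0 > 0 and C_0 ≥ 0, independent of ε, such that for all ε ∈ (0,1) and all r ∈ ℝ, f_{1,ε}'(r)(r - m_0) ≥ δ_0 |f_{1,ε}'(r)| - C_0, where f_{1,ε}' is the Yosida approximation of ∂f_1. -/

import Mathlib

/-!
For `y ∈ ∂f₁(u)` and any `s ∈ D(∂f₁)` (where `f₁ s < ⊤`, as `f₁ 0 = 0`), the subgradient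
inequality together with `f₁ ≥ 0` gives `y (s - u) ≤ f₁ s`. Testing this at `s = m₀ + δ` when `y ≥ 0` and at `s = m₀ - δ` when
`y < 0`, where `[m₀ - δ, m₀ + δ] ⊆ D(∂f₁)`, yields `y (u - m₀) ≥ δ |y| - C₀`. For the Yosida
approximation `y = (r - J r)/ε` we have `r - m₀ = (u - m₀) + ε y` with `u = J r`, and the extra
term `ε y²` is nonnegative.
-/

/-- The subdifferential of an extended-real-valued function on `ℝ`. -/
def subdiff (f : ℝ → EReal) (r : ℝ) : Set ℝ :=
  {y | ∀ s : ℝ, f r + ((y * (s - r) : ℝ) : EReal) ≤ f s}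

lemma ne_top_of_subdiff_nonempty {f : ℝ → EReal} {a s : ℝ} (ha : f a ≠ ⊤)
    (hs : (subdiff f s).Nonempty) : f s ≠ ⊤ := by
  obtain ⟨y, hy⟩ := hs
  intro htop
  have h := hy a
  rw [htop, EReal.top_add_of_ne_bot (EReal.coe_ne_bot _), top_le_iff] at h
  exact ha h

lemma coe_mul_sub_le_of_mem_subdiff {f : ℝ → EReal} {u y : ℝ} (hu : 0 ≤ f u)
    (hy : y ∈ subdiff f u) (s : ℝ) : ((y * (s - u) : ℝ) : EReal) ≤ f s :=
  calc ((y * (s - u) : ℝ) : EReal) = 0 + ((y * (s - u) : ℝ) : EReal) := (zero_add _).symm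
    _ ≤ f u + ((y * (s - u) : ℝ) : EReal) := by gcongr
    _ ≤ f s := hy s

lemma mul_sub_le_toReal_of_mem_subdiff {f : ℝ → EReal} {u y s : ℝ} (hu : 0 ≤ f u)
    (hy : y ∈ subdiff f u) (hs : f s ≠ ⊤) : y * (s - u) ≤ (f s).toReal := by
  exact_mod_cast (coe_mul_sub_le_of_mem_subdiff hu hy s).trans (EReal.le_coe_toReal hs)

lemma exists_add_sub_mem_of_mem_interior {S : Set ℝ} {m : ℝ} (hm : m ∈ interior S) :
    ∃ δ > 0, m + δ ∈ S ∧ m - δ ∈ S := by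
  obtain ⟨δ, hδ, hball⟩ := Metric.nhds_basis_closedBall.mem_iff.1 (mem_interior_iff_mem_nhds.1 hm)
  refine ⟨δ, hδ, hball ?_, hball ?_⟩ <;> simp [abs_of_pos hδ]

lemma sub_max_le_mul_sub_of_mul_sub_le {y u r m δ A B ε : ℝ} (hε : 0 ≤ ε) (hr : r = u + ε * y)
    (hA : y * (m + δ - u) ≤ A) (hB : y * (m - δ - u) ≤ B) :
    δ * |y| - max A B ≤ y * (r - m) := by
  have hεy : 0 ≤ ε * y ^ 2 := by positivity
  have hmul : y * (r - m) = y * (u - m) + ε * y ^ 2 := by rw [hr]; ring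
  rcases le_or_gt 0 y with hy | hy
  · rw [abs_of_nonneg hy]
    nlinarith [le_max_left A B]
  · rw [abs_of_neg hy]
    nlinarith [le_max_right A B]

theorem yosida_coercivity_estimate_general
    (f₁ : ℝ → EReal)
    (hnonneg : ∀ r, 0 ≤ f₁ r)
    (hzero : f₁ 0 = 0)
    (m₀ : ℝ)
    (hm₀ : m₀ ∈ interior {r : ℝ | (subdiff f₁ r).Nonempty}) :
    ∃ δ₀ C₀ : ℝ, 0 < δ₀ ∧ 0 ≤ C₀ ∧
      ∀ ε ∈ Set.Ioo (0 : ℝ) 1, ∀ J : ℝ → ℝ,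
        (∀ r : ℝ, (r - J r) / ε ∈ subdiff f₁ (J r)) →
        ∀ r : ℝ, (r - J r) / ε * (r - m₀) ≥ δ₀ * |(r - J r) / ε| - C₀ := by
  obtain ⟨δ, hδ, hplus, hminus⟩ := exists_add_sub_mem_of_mem_interior hm₀
  have hfinite : ∀ {s}, s ∈ {r : ℝ | (subdiff f₁ r).Nonempty} → f₁ s ≠ ⊤ :=
    ne_top_of_subdiff_nonempty (a := 0) (by simp [hzero])
  refine ⟨δ, max (f₁ (m₀ + δ)).toReal (f₁ (m₀ - δ)).toReal, hδ,
    le_max_of_le_left (EReal.toReal_nonneg (hnonneg _)), ?_⟩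
  rintro ε ⟨hε, -⟩ J hJ r
  exact sub_max_le_mul_sub_of_mul_sub_le hε.le (by field_simp; ring)
    (mul_sub_le_toReal_of_mem_subdiff (hnonneg _) (hJ r) (hfinite hplus))
    (mul_sub_le_toReal_of_mem_subdiff (hnonneg _) (hJ r) (hfinite hminus))

/-- If `0` and `m₀` lie in the interior of the domain `D(∂f₁)`, then there exist
`δ₀ > 0` and `C₀ ≥ 0`, independent of `ε ∈ (0,1)`, such that the Yosida approximation
`f₁ε'(r) = (r - J r)/ε` satisfies `f₁ε'(r)(r - m₀) ≥ δ₀|f₁ε'(r)| - C₀` for all `r`. -/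
theorem yosida_coercivity_estimate
    (f₁ : ℝ → EReal)
    (hnonneg : ∀ r, 0 ≤ f₁ r)
    (hzero : f₁ 0 = 0)
    (hlsc : LowerSemicontinuous f₁)
    (hconv : ∀ a b t : ℝ, 0 ≤ t → t ≤ 1 →
      f₁ (t * a + (1 - t) * b) ≤ (t : EReal) * f₁ a + ((1 - t : ℝ) : EReal) * f₁ b)
    (m₀ : ℝ)
    (hm₀ : m₀ ∈ interior {r : ℝ | (subdiff f₁ r).Nonempty})
    (h0 : (0 : ℝ) ∈ interior {r : ℝ | (subdiff f₁ r).Nonempty}) :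
    ∃ δ₀ C₀ : ℝ, 0 < δ₀ ∧ 0 ≤ C₀ ∧
      ∀ ε ∈ Set.Ioo (0 : ℝ) 1, ∀ J : ℝ → ℝ,
        (∀ r : ℝ, (r - J r) / ε ∈ subdiff f₁ (J r)) →
        ∀ r : ℝ, (r - J r) / ε * (r - m₀) ≥ δ₀ * |(r - J r) / ε| - C₀ :=
  yosida_coercivity_estimate_general f₁ hnonneg hzero m₀ hm₀
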